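/- arXiv:2001.09225 — 9 statements merged into one kernel-verified Lean document; each statement's English description precedes it below -/
import Mathlib

section
/- Let (Ω, 𝔽, ℙ) be a probability space, 𝒳 and 𝒴 measurable spaces, X : Ω → 𝒳 and Y : Ω → 𝒴 random elements (X plays the role of the observed data Y^n and Y that of the future observation Y_{n+1}). Let π : 𝒴 × 𝒳 → [0,1] be a measurable function satisfying ℙ(π(Y, X) ≤ α) ≤ α for every α ∈ [0,1]. Define the consonant upper predictive probability Π̄_x(A) = sup_{ỹ ∈ A} π(ỹ, x) for A ⊆ 𝒴. Then for every subset A ⊆ 𝒴 and every α ∈ [0,1], the event {Π̄_X(A) ≤ α and Y ∈ A} is contained in the measurable event {π(Y, X) ≤ α}, and consequently its outer probability satisfies ℙ*({Π̄_X(A) ≤ α, Y ∈ A}) ≤ α. (Theorem 1: strong prediction validity of the consonant plausibility predictor.) -/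
open MeasureTheory

/-- `hf` cannot be dropped: an unbounded real `⨆` is the junk value `0`. -/
lemma le_of_iSup_subtype_le {β : Type*} {f : β → ℝ} {A : Set β} {α : ℝ} {y : β}
    (hf : BddAbove (f '' A)) (hsup : ⨆ yt : A, f yt ≤ α) (hy : y ∈ A) : f y ≤ α :=
  (le_ciSup (Set.image_eq_range f A ▸ hf) (⟨y, hy⟩ : A)).trans hsup

theorem stmt0_general
    {Ω 𝒳 𝒴 : Type*} [MeasurableSpace Ω]
    (Pr : Measure Ω)
    (X : Ω → 𝒳) (Y : Ω → 𝒴)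
    (π : 𝒴 → 𝒳 → ℝ)
    (hπ01 : ∀ y x, π y x ∈ Set.Icc (0:ℝ) 1)
    (hcal : ∀ α ∈ Set.Icc (0:ℝ) 1, Pr {ω | π (Y ω) (X ω) ≤ α} ≤ ENNReal.ofReal α)
    (A : Set 𝒴) (α : ℝ) (hα : α ∈ Set.Icc (0:ℝ) 1) :
    {ω | (⨆ yt : A, π (yt : 𝒴) (X ω)) ≤ α ∧ Y ω ∈ A} ⊆ {ω | π (Y ω) (X ω) ≤ α} ∧
      Pr {ω | (⨆ yt : A, π (yt : 𝒴) (X ω)) ≤ α ∧ Y ω ∈ A} ≤ ENNReal.ofReal α := by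
  have hsub : {ω | (⨆ yt : A, π (yt : 𝒴) (X ω)) ≤ α ∧ Y ω ∈ A} ⊆
      {ω | π (Y ω) (X ω) ≤ α} := fun ω ⟨hsup, hmem⟩ =>
    le_of_iSup_subtype_le (f := fun y => π y (X ω))
      ⟨1, by rintro _ ⟨y, -, rfl⟩; exact (hπ01 y (X ω)).2⟩ hsup hmem
  exact ⟨hsub, (measure_mono hsub).trans (hcal α hα)⟩

/-- **Theorem 1 (strong prediction validity of the consonant plausibility predictor).**
If the plausibility contour `π` is calibrated, i.e. `Pr(π(Y,X) ≤ α) ≤ α` for all `α ∈ [0,1]`,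
then for every assertion `A` and `α ∈ [0,1]`, the event
`{Π̄_X(A) ≤ α, Y ∈ A}` (with `Π̄_x(A) = sup_{yt ∈ A} π(yt, x)`) is contained in the event
`{π(Y,X) ≤ α}`, and hence its outer probability (a measure applied to an arbitrary set in
Mathlib is the induced outer measure) is at most `α`. -/
theorem stmt0
    {Ω 𝒳 𝒴 : Type*} [MeasurableSpace Ω] [MeasurableSpace 𝒳] [MeasurableSpace 𝒴]
    (Pr : Measure Ω) [IsProbabilityMeasure Pr]
    (X : Ω → 𝒳) (Y : Ω → 𝒴) (hX : Measurable X) (hY : Measurable Y)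
    (π : 𝒴 → 𝒳 → ℝ) (hπ : Measurable fun p : 𝒴 × 𝒳 => π p.1 p.2)
    (hπ01 : ∀ y x, π y x ∈ Set.Icc (0:ℝ) 1)
    (hcal : ∀ α ∈ Set.Icc (0:ℝ) 1, Pr {ω | π (Y ω) (X ω) ≤ α} ≤ ENNReal.ofReal α)
    (A : Set 𝒴) (α : ℝ) (hα : α ∈ Set.Icc (0:ℝ) 1) :
    {ω | (⨆ yt : A, π (yt : 𝒴) (X ω)) ≤ α ∧ Y ω ∈ A} ⊆ {ω | π (Y ω) (X ω) ≤ α} ∧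
      Pr {ω | (⨆ yt : A, π (yt : 𝒴) (X ω)) ≤ α ∧ Y ω ∈ A} ≤ ENNReal.ofReal α :=
  stmt0_general Pr X Y π hπ01 hcal A α hα
end

section
/- Let (Ω, 𝔽, ℙ) be a probability space, 𝒳 and 𝒴 measurable spaces, X : Ω → 𝒳 and Y : Ω → 𝒴 random elements, and let π : 𝒴 × 𝒳 → [0,1] be measurable with ℙ(π(Y, X) ≤ α) ≤ α for every α ∈ [0,1]. Define Π̄_x(A) = sup_{ỹ ∈ A} π(ỹ, x) and the dual lower predictive probability Π̲_x(A) = 1 − Π̄_x(Aᶜ). Then for every subset A ⊆ 𝒴 and every α ∈ [0,1], the outer probability of the event {Π̲_X(A) ≥ 1 − α and Y ∉ A} is at most α. (Dual form of strong validity: large lower probability is rarely assigned to false assertions.) -/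
open MeasureTheory

/-! On the event `Π̲_X(A) ≥ 1 - α, Y ∉ A` the true value `Y` lies in `Aᶜ`, so
`π(Y, X) ≤ sup_{Aᶜ} π(·, X) = 1 - Π̲_X(A) ≤ α`; calibration bounds the probability of the latter. -/

theorem le_ciSup_compl_of_notMem {𝒴 : Type*} {f : 𝒴 → ℝ} (hf : BddAbove (Set.range f))
    {A : Set 𝒴} {y : 𝒴} (hy : y ∉ A) : f y ≤ ⨆ yt : (Aᶜ : Set 𝒴), f yt :=
  le_ciSup (f := fun yt : (Aᶜ : Set 𝒴) => f yt)
    (hf.mono (Set.range_comp_subset_range _ _)) ⟨y, hy⟩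

theorem setOf_lowerProb_ge_and_notMem_subset {Ω 𝒳 𝒴 : Type*} (X : Ω → 𝒳) (Y : Ω → 𝒴)
    (π : 𝒴 → 𝒳 → ℝ) (hπ1 : ∀ y x, π y x ≤ 1) (A : Set 𝒴) (α : ℝ) :
    {ω | 1 - α ≤ 1 - (⨆ yt : (Aᶜ : Set 𝒴), π (yt : 𝒴) (X ω)) ∧ Y ω ∉ A}
      ⊆ {ω | π (Y ω) (X ω) ≤ α} := by
  rintro ω ⟨hlower, hYA⟩
  have hbdd : BddAbove (Set.range fun y => π y (X ω)) :=
    ⟨1, by rintro _ ⟨y, rfl⟩; exact hπ1 _ _⟩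
  have hπ_le_sup := le_ciSup_compl_of_notMem hbdd hYA
  show π (Y ω) (X ω) ≤ α
  linarith

theorem stmt1_general
    {Ω 𝒳 𝒴 : Type*} [MeasurableSpace Ω]
    (Pr : Measure Ω)
    (X : Ω → 𝒳) (Y : Ω → 𝒴)
    (π : 𝒴 → 𝒳 → ℝ)
    (hπ01 : ∀ y x, π y x ∈ Set.Icc (0:ℝ) 1)
    (hcal : ∀ α ∈ Set.Icc (0:ℝ) 1, Pr {ω | π (Y ω) (X ω) ≤ α} ≤ ENNReal.ofReal α)
    (A : Set 𝒴) (α : ℝ) (hα : α ∈ Set.Icc (0:ℝ) 1) :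
    Pr {ω | 1 - α ≤ 1 - (⨆ yt : (Aᶜ : Set 𝒴), π (yt : 𝒴) (X ω)) ∧ Y ω ∉ A}
      ≤ ENNReal.ofReal α :=
  (measure_mono (setOf_lowerProb_ge_and_notMem_subset X Y π (fun y x => (hπ01 y x).2) A α)).trans
    (hcal α hα)

/-- **Dual form of strong validity.** With a calibrated plausibility contour `π`,
the consonant upper predictive probability `Π̄_x(A) = sup_{yt ∈ A} π(yt, x)` and its
conjugate lower probability `Π̲_x(A) = 1 - Π̄_x(Aᶜ)`, the outer probability of the event
`{Π̲_X(A) ≥ 1 - α, Y ∉ A}` is at most `α`, for every `A ⊆ 𝒴` and `α ∈ [0,1]`. -/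
theorem stmt1
    {Ω 𝒳 𝒴 : Type*} [MeasurableSpace Ω] [MeasurableSpace 𝒳] [MeasurableSpace 𝒴]
    (Pr : Measure Ω) [IsProbabilityMeasure Pr]
    (X : Ω → 𝒳) (Y : Ω → 𝒴) (hX : Measurable X) (hY : Measurable Y)
    (π : 𝒴 → 𝒳 → ℝ) (hπ : Measurable fun p : 𝒴 × 𝒳 => π p.1 p.2)
    (hπ01 : ∀ y x, π y x ∈ Set.Icc (0:ℝ) 1)
    (hcal : ∀ α ∈ Set.Icc (0:ℝ) 1, Pr {ω | π (Y ω) (X ω) ≤ α} ≤ ENNReal.ofReal α)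
    (A : Set 𝒴) (α : ℝ) (hα : α ∈ Set.Icc (0:ℝ) 1) :
    Pr {ω | 1 - α ≤ 1 - (⨆ yt : (Aᶜ : Set 𝒴), π (yt : 𝒴) (X ω)) ∧ Y ω ∉ A}
      ≤ ENNReal.ofReal α :=
  stmt1_general Pr X Y π hπ01 hcal A α hα
end

section
/- Let (Ω, 𝔽, ℙ) be a probability space, 𝒳 and 𝒴 measurable spaces, X : Ω → 𝒳 and Y : Ω → 𝒴 random elements, and for each x ∈ 𝒳 let Π̄_x be a [0,1]-valued set function on 𝒴 (an upper probabilistic predictor) such that x ↦ Π̄_x(A) is measurable for the fixed measurable set A ⊆ 𝒴. If sup_{x ∈ 𝒳} Π̄_x(A) < ℙ(Y ∈ A), then strong prediction validity fails at A: there exists α ∈ [0,1] with ℙ(Π̄_X(A) ≤ α and Y ∈ A) > α. In fact, any α strictly between sup_x Π̄_x(A) and ℙ(Y ∈ A) works, since then {Π̄_X(A) ≤ α, Y ∈ A} = {Y ∈ A}. (Proposition 1: sure loss precludes strong validity.) -/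
open MeasureTheory

theorem setOf_le_and_mem_eq_of_ciSup_lt {Ω ι 𝒴 β : Type*} [ConditionallyCompleteLattice β]
    {f : ι → β} (hf : BddAbove (Set.range f)) (X : Ω → ι) (Y : Ω → 𝒴) (A : Set 𝒴) {α : β}
    (hα : ⨆ i, f i < α) :
    {ω | f (X ω) ≤ α ∧ Y ω ∈ A} = {ω | Y ω ∈ A} := by
  ext ω
  simpa using fun _ => (le_ciSup hf (X ω)).trans hα.le

theorem stmt2_general
    {Ω 𝒳 𝒴 : Type*} [MeasurableSpace Ω]
    (Pr : Measure Ω) [IsProbabilityMeasure Pr]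
    (X : Ω → 𝒳) (Y : Ω → 𝒴)
    (Pbar : 𝒳 → Set 𝒴 → ℝ) (A : Set 𝒴)
    (h01 : ∀ x, Pbar x A ∈ Set.Icc (0:ℝ) 1)
    (hsl : (⨆ x, Pbar x A) < (Pr {ω | Y ω ∈ A}).toReal) :
    (∀ α : ℝ, (⨆ x, Pbar x A) < α → α < (Pr {ω | Y ω ∈ A}).toReal →
        ({ω | Pbar (X ω) A ≤ α ∧ Y ω ∈ A} = {ω | Y ω ∈ A} ∧
          ENNReal.ofReal α < Pr {ω | Pbar (X ω) A ≤ α ∧ Y ω ∈ A})) ∧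
      ∃ α ∈ Set.Icc (0:ℝ) 1,
        ENNReal.ofReal α < Pr {ω | Pbar (X ω) A ≤ α ∧ Y ω ∈ A} := by
  have hbdd : BddAbove (Set.range fun x => Pbar x A) :=
    ⟨1, by rintro _ ⟨x, rfl⟩; exact (h01 x).2⟩
  have hsup_nonneg : 0 ≤ ⨆ x, Pbar x A := Real.iSup_nonneg fun x => (h01 x).1
  have hprob_le_one : (Pr {ω | Y ω ∈ A}).toReal ≤ 1 :=
    ENNReal.toReal_le_of_le_ofReal zero_le_one (by simpa using prob_le_one)
  have between : ∀ α : ℝ, (⨆ x, Pbar x A) < α → α < (Pr {ω | Y ω ∈ A}).toReal →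
      ({ω | Pbar (X ω) A ≤ α ∧ Y ω ∈ A} = {ω | Y ω ∈ A} ∧
        ENNReal.ofReal α < Pr {ω | Pbar (X ω) A ≤ α ∧ Y ω ∈ A}) := by
    intro α hsup_lt hlt_prob
    have hevent := setOf_le_and_mem_eq_of_ciSup_lt hbdd X Y A hsup_lt
    refine ⟨hevent, ?_⟩
    rw [hevent, ENNReal.ofReal_lt_iff_lt_toReal (hsup_nonneg.trans hsup_lt.le) (measure_ne_top _ _)]
    exact hlt_prob
  refine ⟨between, ((⨆ x, Pbar x A) + (Pr {ω | Y ω ∈ A}).toReal) / 2,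
    ⟨by linarith, by linarith⟩, (between _ ?_ ?_).2⟩ <;> linarith

/-- **Proposition 1 (sure loss precludes strong validity).** If the upper probabilistic
predictor `Pbar` satisfies `sup_x Pbar x A < Pr(Y ∈ A)`, then strong validity fails at `A`:
any `α` strictly between `sup_x Pbar x A` and `Pr(Y ∈ A)` satisfies
`{Π̄_X(A) ≤ α, Y ∈ A} = {Y ∈ A}` and `Pr(Π̄_X(A) ≤ α, Y ∈ A) > α`; in particular there
exists `α ∈ [0,1]` with `Pr(Π̄_X(A) ≤ α, Y ∈ A) > α`. -/
theorem stmt2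
    {Ω 𝒳 𝒴 : Type*} [MeasurableSpace Ω] [MeasurableSpace 𝒳] [MeasurableSpace 𝒴]
    (Pr : Measure Ω) [IsProbabilityMeasure Pr]
    (X : Ω → 𝒳) (Y : Ω → 𝒴) (hX : Measurable X) (hY : Measurable Y)
    (Pbar : 𝒳 → Set 𝒴 → ℝ) (A : Set 𝒴) (hA : MeasurableSet A)
    (hmeas : Measurable fun x => Pbar x A)
    (h01 : ∀ x, Pbar x A ∈ Set.Icc (0:ℝ) 1)
    (hsl : (⨆ x, Pbar x A) < (Pr {ω | Y ω ∈ A}).toReal) :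
    (∀ α : ℝ, (⨆ x, Pbar x A) < α → α < (Pr {ω | Y ω ∈ A}).toReal →
        ({ω | Pbar (X ω) A ≤ α ∧ Y ω ∈ A} = {ω | Y ω ∈ A} ∧
          ENNReal.ofReal α < Pr {ω | Pbar (X ω) A ≤ α ∧ Y ω ∈ A})) ∧
      ∃ α ∈ Set.Icc (0:ℝ) 1,
        ENNReal.ofReal α < Pr {ω | Pbar (X ω) A ≤ α ∧ Y ω ∈ A} :=
  stmt2_general Pr X Y Pbar A h01 hsl
end

section
/- Let (Ω, 𝔽, ℙ) be a probability space, 𝒳 and 𝒴 measurable spaces, X : Ω → 𝒳 and Y : Ω → 𝒴 random elements, and let κ : 𝒳 → Measures(𝒴) be a regular conditional distribution of Y given X (so that for every measurable A ⊆ 𝒴, E[1_{Y ∈ A} | σ(X)] = κ(X)(A) ℙ-a.s.). Let Π̄ : 𝒳 × (measurable sets of 𝒴) → [0,1] be such that x ↦ Π̄_x(A) is measurable and Π̄_x(A) ≥ κ(x)(A) for (ℙ ∘ X⁻¹)-a.e. x and every measurable A. Then the predictor is strongly valid: for every measurable A ⊆ 𝒴 and every α ∈ [0,1], ℙ(Π̄_X(A)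 ≤ α and Y ∈ A) ≤ α. (Proposition 2: a predictor dominating the true conditional distribution is strongly valid.) -/
open MeasureTheory ProbabilityTheory

/-!
Let `s = {Π̄_X(A) ≤ α}`, an event of `σ(X)`. Integrating the conditional probability of
`Y ∈ A` over `s` gives `ℙ(s ∩ {Y ∈ A}) = ∫_s κ(X)(A) dℙ`, and on `s` the integrand is at most
`Π̄_X(A) ≤ α`, so the integral is at most `α ℙ(s) ≤ α`.
-/

section ConditionalProbability

variable {Ω : Type*} {m mΩ : MeasurableSpace Ω} {μ : Measure Ω} {E s : Set Ω} {g : Ω → ℝ}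

theorem measureReal_inter_eq_setIntegral_of_condExp_indicator_ae_eq [IsFiniteMeasure μ]
    (hm : m ≤ mΩ) (hE : MeasurableSet E) (hs : MeasurableSet[m] s)
    (hg : μ[E.indicator 1 | m] =ᵐ[μ] g) :
    μ.real (s ∩ E) = ∫ ω in s, g ω ∂μ := by
  have hint : Integrable (E.indicator (1 : Ω → ℝ)) μ := (integrable_const 1).indicator hE
  calc μ.real (s ∩ E) = ∫ ω in s, E.indicator 1 ω ∂μ := by
        rw [integral_indicator_one hE, measureReal_restrict_apply hE, Set.inter_comm]
    _ = ∫ ω in s, μ[E.indicator 1 | m] ω ∂μ := (setIntegral_condExp hm hint hs).symm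
    _ = ∫ ω in s, g ω ∂μ := setIntegral_congr_ae (hm s hs) (hg.mono fun _ h _ => h)

theorem measure_inter_le_of_condExp_indicator_le [IsProbabilityMeasure μ]
    (hm : m ≤ mΩ) (hE : MeasurableSet E) (hs : MeasurableSet[m] s)
    (hg : μ[E.indicator 1 | m] =ᵐ[μ] g) {α : ℝ} (hα : 0 ≤ α)
    (hgα : ∀ᵐ ω ∂μ, ω ∈ s → g ω ≤ α) :
    μ (s ∩ E) ≤ ENNReal.ofReal α := by
  have hgint : Integrable g μ := integrable_condExp.congr hg
  rw [ENNReal.le_ofReal_iff_toReal_le (measure_ne_top _ _) hα]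
  calc μ.real (s ∩ E) = ∫ ω in s, g ω ∂μ :=
        measureReal_inter_eq_setIntegral_of_condExp_indicator_ae_eq hm hE hs hg
    _ ≤ ∫ _ in s, α ∂μ :=
        setIntegral_mono_on_ae hgint.integrableOn (integrableOn_const (measure_ne_top _ _))
          (hm s hs) hgα
    _ = μ.real s * α := by rw [setIntegral_const, smul_eq_mul]
    _ ≤ α := mul_le_of_le_one_left hα measureReal_le_one

end ConditionalProbability

theorem stmt3_general
    {Ω 𝒳 𝒴 : Type*} [MeasurableSpace Ω] [MeasurableSpace 𝒳] [MeasurableSpace 𝒴]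
    (Pr : Measure Ω) [IsProbabilityMeasure Pr]
    (X : Ω → 𝒳) (Y : Ω → 𝒴) (hX : Measurable X) (hY : Measurable Y)
    (κ : Kernel 𝒳 𝒴)
    (hκ : ∀ A : Set 𝒴, MeasurableSet A →
      (Pr[fun ω => Set.indicator A (fun _ => (1:ℝ)) (Y ω) |
          MeasurableSpace.comap X inferInstance])
        =ᵐ[Pr] fun ω => (κ (X ω) A).toReal)
    (Pbar : 𝒳 → Set 𝒴 → ℝ)
    (hmeas : ∀ A : Set 𝒴, MeasurableSet A → Measurable fun x => Pbar x A)
    (hdom : ∀ A : Set 𝒴, MeasurableSet A →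
      ∀ᵐ x ∂(Pr.map X), κ x A ≤ ENNReal.ofReal (Pbar x A)) :
    ∀ A : Set 𝒴, MeasurableSet A → ∀ α ∈ Set.Icc (0:ℝ) 1,
      Pr {ω | Pbar (X ω) A ≤ α ∧ Y ω ∈ A} ≤ ENNReal.ofReal α := by
  intro A hA α hα
  have hs : MeasurableSet[MeasurableSpace.comap X inferInstance] (X ⁻¹' {x | Pbar x A ≤ α}) :=
    ⟨_, measurableSet_le (hmeas A hA) measurable_const, rfl⟩
  have hindicator : (fun ω => A.indicator (fun _ => (1:ℝ)) (Y ω)) = (Y ⁻¹' A).indicator 1 := by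
    ext ω; by_cases h : Y ω ∈ A <;> simp [h]
  have hbound : ∀ᵐ ω ∂Pr, Pbar (X ω) A ≤ α → (κ (X ω) A).toReal ≤ α := by
    filter_upwards [ae_of_ae_map hX.aemeasurable (hdom A hA)] with ω hκα hPα
    exact ENNReal.toReal_le_of_le_ofReal hα.1 (hκα.trans (ENNReal.ofReal_le_ofReal hPα))
  exact measure_inter_le_of_condExp_indicator_le hX.comap_le (hY hA) hs
    (hindicator ▸ hκ A hA) hα.1 hbound

/-- **Proposition 2 (a predictor dominating the true conditional distribution is strongly
valid).** Let `κ` be a regular conditional distribution of `Y` given `X`, i.e. a Markov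
kernel with `E[1_{Y ∈ A} | σ(X)] = κ(X)(A)` a.s. for every measurable `A`.  If the
predictor `Pbar` (measurable in `x`, `[0,1]`-valued) dominates `κ`, in the sense that
`Pbar x A ≥ κ x A` for `(Pr ∘ X⁻¹)`-a.e. `x` and every measurable `A`, then it is strongly
valid: `Pr(Pbar (X) A ≤ α and Y ∈ A) ≤ α` for all measurable `A` and `α ∈ [0,1]`. -/
theorem stmt3
    {Ω 𝒳 𝒴 : Type*} [MeasurableSpace Ω] [MeasurableSpace 𝒳] [MeasurableSpace 𝒴]
    (Pr : Measure Ω) [IsProbabilityMeasure Pr]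
    (X : Ω → 𝒳) (Y : Ω → 𝒴) (hX : Measurable X) (hY : Measurable Y)
    (κ : Kernel 𝒳 𝒴) [IsMarkovKernel κ]
    (hκ : ∀ A : Set 𝒴, MeasurableSet A →
      (Pr[fun ω => Set.indicator A (fun _ => (1:ℝ)) (Y ω) |
          MeasurableSpace.comap X inferInstance])
        =ᵐ[Pr] fun ω => (κ (X ω) A).toReal)
    (Pbar : 𝒳 → Set 𝒴 → ℝ)
    (hmeas : ∀ A : Set 𝒴, MeasurableSet A → Measurable fun x => Pbar x A)
    (h01 : ∀ x A, Pbar x A ∈ Set.Icc (0:ℝ) 1)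
    (hdom : ∀ A : Set 𝒴, MeasurableSet A →
      ∀ᵐ x ∂(Pr.map X), κ x A ≤ ENNReal.ofReal (Pbar x A)) :
    ∀ A : Set 𝒴, MeasurableSet A → ∀ α ∈ Set.Icc (0:ℝ) 1,
      Pr {ω | Pbar (X ω) A ≤ α ∧ Y ω ∈ A} ≤ ENNReal.ofReal α :=
  stmt3_general Pr X Y hX hY κ hκ Pbar hmeas hdom
end

section
/- Fix n ∈ ℕ and let V be uniformly distributed on 𝓘_{n+1} = {1, …, n+1}. Let γ' : 𝓘_{n+1} → {0, 1/(n+1), 2/(n+1), …, 1} be a grid-valued function satisfying γ'(v) ≤ 1 − (v−1)/(n+1) for all v ∈ 𝓘_{n+1} and γ'(v₀) < 1 − (v₀−1)/(n+1) for some v₀ ∈ 𝓘_{n+1}. Then γ' is not valid: there exists α ∈ [0,1] such that ℙ( γ'(V) ≤ k_n(α) ) > α, where k_n(α) = ⌊(n+1)α⌋/(n+1). In particular, one may take α = (n+1−v₀)/(n+1). (No random set whose contour is strictly smaller than that of S = {1,…,Ṽ} can be valid.) -/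
/-!
Put `k = n + 1 - v₀`, so that `α = k/(n+1)` and `k_n(α) = α`. For `v > v₀` the
reference contour already gives `γ'(v) ≤ (n + 2 - v)/(n+1) ≤ α`, and at `v₀` the strict
inequality `γ'(v₀) < (k+1)/(n+1)` drops to `γ'(v₀) ≤ α` because `γ'` takes grid values.
Hence the event `γ'(V) ≤ k_n(α)` contains `{v₀, …, n+1}`, of probability `(k+1)/(n+1) > α`.
-/

open MeasureTheory
open scoped ENNReal
open Finset

theorem PMF.card_div_card_le_toMeasure_uniformOfFinset {α : Type*} [MeasurableSpace α]
    [MeasurableSingletonClass α] {s t : Finset α} (hs : s.Nonempty) (hts : t ⊆ s) {u : Set α}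
    (htu : ↑t ⊆ u) : (#t : ℝ≥0∞) / #s ≤ (PMF.uniformOfFinset s hs).toMeasure u := by
  classical
  calc (#t : ℝ≥0∞) / #s = (PMF.uniformOfFinset s hs).toMeasure t := by
        rw [PMF.toMeasure_uniformOfFinset_apply _ _ t.measurableSet]
        simp only [mem_coe, filter_mem_eq_inter, inter_eq_right.mpr hts]
    _ ≤ _ := measure_mono htu

theorem ENNReal.ofReal_div_lt_succ_div (k : ℕ) {N : ℕ} (hN : 0 < N) :
    ENNReal.ofReal ((k : ℝ) / N) < ((k + 1 : ℕ) : ℝ≥0∞) / N := by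
  rw [ENNReal.ofReal_div_of_pos (by exact_mod_cast hN), ENNReal.ofReal_natCast,
    ENNReal.ofReal_natCast]
  exact ENNReal.div_lt_div_right (by exact_mod_cast hN.ne') (ENNReal.natCast_ne_top N)
    (by exact_mod_cast k.lt_succ_self)

theorem natCast_div_le_of_lt_succ_div {N : ℝ} (hN : 0 < N) {j k : ℕ}
    (h : (j : ℝ) / N < (k + 1) / N) : (j : ℝ) / N ≤ k / N := by
  have hjk : j < k + 1 := by exact_mod_cast (div_lt_div_iff_of_pos_right hN).mp h
  gcongr
  exact_mod_cast Nat.lt_succ_iff.mp hjk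

theorem one_sub_pred_div_eq {n v : ℕ} (hv : v ≤ n + 1) :
    1 - ((v : ℝ) - 1) / ((n : ℝ) + 1) = (((n + 1 - v : ℕ) : ℝ) + 1) / ((n : ℝ) + 1) := by
  rw [Nat.cast_sub hv]
  field_simp
  push_cast
  ring

theorem grid_contour_le_of_mem_Icc {n v₀ : ℕ} {γ' : ℕ → ℝ}
    (hgrid : ∃ j : ℕ, γ' v₀ = (j:ℝ)/((n:ℝ)+1))
    (hle : ∀ v ∈ Ioc v₀ (n+1), γ' v ≤ 1 - ((v:ℝ) - 1)/((n:ℝ)+1))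
    (hlt : γ' v₀ < 1 - ((v₀:ℝ) - 1)/((n:ℝ)+1)) {v : ℕ} (hv : v ∈ Icc v₀ (n+1)) :
    γ' v ≤ ((n + 1 - v₀ : ℕ) : ℝ) / ((n:ℝ)+1) := by
  obtain ⟨hv₀v, hvn⟩ := mem_Icc.mp hv
  rcases hv₀v.eq_or_lt with rfl | hv₀v
  · obtain ⟨j, hj⟩ := hgrid
    rw [one_sub_pred_div_eq hvn, hj] at hlt
    rw [hj]
    exact natCast_div_le_of_lt_succ_div (by positivity) hlt
  · calc γ' v ≤ (((n + 1 - v : ℕ) : ℝ) + 1) / ((n:ℝ)+1) :=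
          one_sub_pred_div_eq hvn ▸ hle v (mem_Ioc.mpr ⟨hv₀v, hvn⟩)
      _ ≤ ((n + 1 - v₀ : ℕ) : ℝ) / ((n:ℝ)+1) := by
        gcongr
        exact_mod_cast (by omega : n + 1 - v + 1 ≤ n + 1 - v₀)

/-- **No strictly smaller grid-valued contour is valid.** Let `V` be uniform on
`𝓘_{n+1} = {1,…,n+1}` and `γ'` a grid-valued contour with `γ'(v) ≤ 1 - (v-1)/(n+1)`
everywhere and strict inequality at some `v₀`.  Then `γ'` is not valid: there is
`α ∈ [0,1]` with `P(γ'(V) ≤ k_n(α)) > α` where `k_n(α) = ⌊(n+1)α⌋/(n+1)`;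
in particular `α = (n+1-v₀)/(n+1)` works. -/
theorem stmt7 (n : ℕ) (γ' : ℕ → ℝ)
    (hgrid : ∀ v ∈ Finset.Icc 1 (n+1),
      ∃ j ∈ Finset.range (n+2), γ' v = (j:ℝ)/((n:ℝ)+1))
    (hle : ∀ v ∈ Finset.Icc 1 (n+1), γ' v ≤ 1 - ((v:ℝ) - 1)/((n:ℝ)+1))
    (v₀ : ℕ) (hv₀ : v₀ ∈ Finset.Icc 1 (n+1))
    (hlt : γ' v₀ < 1 - ((v₀:ℝ) - 1)/((n:ℝ)+1)) :
    ENNReal.ofReal (((n:ℝ) + 1 - (v₀:ℝ))/((n:ℝ)+1)) <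
      (PMF.uniformOfFinset (Finset.Icc 1 (n+1))
          (Finset.nonempty_Icc.mpr (by omega))).toMeasure
        {v : ℕ | γ' v ≤
          (⌊((n:ℝ)+1) * (((n:ℝ) + 1 - (v₀:ℝ))/((n:ℝ)+1))⌋ : ℝ)/((n:ℝ)+1)} ∧
    ∃ α ∈ Set.Icc (0:ℝ) 1,
      ENNReal.ofReal α <
        (PMF.uniformOfFinset (Finset.Icc 1 (n+1))
            (Finset.nonempty_Icc.mpr (by omega))).toMeasure
          {v : ℕ | γ' v ≤ (⌊((n:ℝ)+1)*α⌋ : ℝ)/((n:ℝ)+1)} := by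
  obtain ⟨hv₀1, hv₀n⟩ := mem_Icc.mp hv₀
  have hα : (n:ℝ) + 1 - v₀ = ((n + 1 - v₀ : ℕ) : ℝ) := by
    push_cast [Nat.cast_sub hv₀n]; ring
  have hk : (⌊((n:ℝ)+1) * (((n + 1 - v₀ : ℕ) : ℝ)/((n:ℝ)+1))⌋ : ℝ) =
      (n + 1 - v₀ : ℕ) := by
    rw [mul_div_cancel₀ _ (by positivity), Int.floor_natCast, Int.cast_natCast]
  have hprob : ENNReal.ofReal (((n + 1 - v₀ : ℕ) : ℝ)/((n:ℝ)+1)) <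
      (PMF.uniformOfFinset (Icc 1 (n+1)) (nonempty_Icc.mpr (by omega))).toMeasure
        {v : ℕ | γ' v ≤ ((n + 1 - v₀ : ℕ) : ℝ)/((n:ℝ)+1)} :=
    calc ENNReal.ofReal (((n + 1 - v₀ : ℕ) : ℝ)/((n:ℝ)+1))
        < ((n + 1 - v₀ + 1 : ℕ) : ℝ≥0∞) / (n + 1 : ℕ) := by
          exact_mod_cast ENNReal.ofReal_div_lt_succ_div (n + 1 - v₀) n.succ_pos
      _ = (#(Icc v₀ (n+1)) : ℝ≥0∞) / #(Icc 1 (n+1)) := by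
          rw [Nat.card_Icc, Nat.card_Icc]; congr 3; omega
      _ ≤ _ := PMF.card_div_card_le_toMeasure_uniformOfFinset _
          (Icc_subset_Icc_left hv₀1)
          fun v hv ↦ grid_contour_le_of_mem_Icc ((hgrid v₀ hv₀).imp fun _ hj ↦ hj.2)
            (fun w hw ↦ hle w (mem_Icc.mpr (by grind))) hlt (mem_coe.mp hv)
  rw [hα, hk]
  refine ⟨hprob, ((n + 1 - v₀ : ℕ) : ℝ)/((n:ℝ)+1),
    ⟨by positivity, div_le_one_of_le₀ ?_ (by positivity)⟩, by rwa [hk]⟩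
  exact_mod_cast (by omega : n + 1 - v₀ ≤ n + 1)
end

section
/- Let n ∈ ℕ and t₁, …, t_{n+1} be arbitrary real numbers. For each i ∈ {1, …, n+1} define the (anti-)rank R_i = #{ k ∈ {1, …, n+1} : t_k ≥ t_i }. Then for every integer j ≥ 0, #{ i ∈ {1, …, n+1} : R_i ≤ j } ≤ j. (Deterministic counting lemma underlying conformal validity, valid even in the presence of ties.) -/
/-! The indices of anti-rank at most `j` form an upper set for `t`, so all of them lie weakly
above its lowest member `i₀`; there are at most `antiRank i₀ ≤ j` such indices. -/

namespace Finset

variable {ι α : Type*} [LinearOrder α]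

def antiRank (s : Finset ι) (t : ι → α) (i : ι) : ℕ :=
  #(s.filter fun k => t i ≤ t k)

theorem card_filter_antiRank_le (s : Finset ι) (t : ι → α) (j : ℕ) :
    #(s.filter fun i => s.antiRank t i ≤ j) ≤ j := by
  set S := s.filter fun i => s.antiRank t i ≤ j
  rcases S.eq_empty_or_nonempty with hS | hS
  · simp [hS]
  obtain ⟨i₀, hi₀, hmin⟩ := S.exists_min_image t hS
  have hsub : S ⊆ s.filter fun k => t i₀ ≤ t k := fun i hi =>
    mem_filter.2 ⟨(mem_filter.1 hi).1, hmin i hi⟩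
  calc #S ≤ s.antiRank t i₀ := card_le_card hsub
    _ ≤ j := (mem_filter.1 hi₀).2

end Finset

/-- **Deterministic counting lemma underlying conformal validity.** For real numbers
`t₁,…,t_{n+1}` and anti-ranks `R_i = #{k : t_k ≥ t_i}`, at most `j` indices have
`R_i ≤ j`, for every integer `j ≥ 0` (valid even with ties). -/
theorem stmt8 (n : ℕ) (t : Fin (n+1) → ℝ) (j : ℕ) :
    (Finset.univ.filter fun i : Fin (n+1) =>
        (Finset.univ.filter fun k : Fin (n+1) => t i ≤ t k).card ≤ j).card ≤ j :=
  Finset.univ.card_filter_antiRank_le t j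
end

section
/- Let 𝒴 be a measurable space, n ∈ ℕ, and let (Y₁, …, Y_{n+1}) be an exchangeable random vector in 𝒴^{n+1}, i.e., its joint law is invariant under every permutation of the n+1 coordinates. Let Ψ : 𝒴ⁿ × 𝒴 → ℝ be a measurable non-conformity measure that is invariant under permutations of its first (vector) argument, and set T_i = Ψ( (Y_j)_{j ≠ i}, Y_i ) for i ∈ {1, …, n+1}. Define the conformal plausibility contour evaluated at the truth, π(Y_{n+1}; Yⁿ) = (n+1)^{-1} #{ i : T_i ≥ T_{n+1} }. Then for every α ∈ [0,1], ℙ( π(Y_{n+1}; Yⁿ) ≤ k_n(α) ) ≤ α, where k_n(α) = ⌊(n+1)α⌋/(n+1); in particular ℙ( π(Y_{n+1}; Yⁿ) ≤ α ) ≤ α for all α. (Calibration property (pi.1) of the conformal transducer.) -/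
/-!
Exchangeability of `(Y₁, …, Y_{n+1})` and the symmetry of `Ψ` make the law of the score vector
`(T₁, …, T_{n+1})` invariant under permutations, so every index `i` has the same probability of
having rank `#{j | T_i ≤ T_j}` at most `k`. Deterministically at most `k` indices have rank at
most `k`: the one with the smallest score among them is dominated by all of them. Summing over
the indices gives `(n+1) P(π ≤ k/(n+1)) ≤ k`.
-/

open MeasureTheory Finset
open scoped ENNReal

section Rank

variable {ι α : Type*} [Fintype ι]

def conformalRank [LE α] [DecidableLE α] (t : ι → α) (i : ι) : ℕ := #{j | t i ≤ t j}

noncomputable def conformalPValue [LE α] [DecidableLE α] (t : ι → α) (i : ι) : ℝ :=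
  conformalRank t i / Fintype.card ι

theorem conformalRank_comp_perm [LE α] [DecidableLE α] (t : ι → α) (σ : Equiv.Perm ι) (i : ι) :
    conformalRank (t ∘ σ) i = conformalRank t (σ i) :=
  card_equiv σ fun j => by simp

theorem card_filter_conformalRank_le [LinearOrder α] (t : ι → α) (k : ℕ) :
    #{i | conformalRank t i ≤ k} ≤ k := by
  set S : Finset ι := {i | conformalRank t i ≤ k}
  obtain hS | hS := S.eq_empty_or_nonempty
  · simp [hS]
  obtain ⟨i₀, hi₀, hmin⟩ := S.exists_min_image t hS
  calc #S ≤ conformalRank t i₀ := card_le_card fun i hi => by simpa using hmin i hi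
    _ ≤ k := (mem_filter.mp hi₀).2

end Rank

theorem Function.Injective.exists_perm_comp_eq {β γ : Type*} {f g : β → γ}
    (hf : f.Injective) (hg : g.Injective) (h : Set.range f = Set.range g) :
    ∃ τ : Equiv.Perm β, g ∘ τ = f :=
  ⟨(Equiv.ofInjective f hf).trans ((Equiv.setCongr h).trans (Equiv.ofInjective g hg).symm),
    funext fun j => by simp [Equiv.apply_ofInjective_symm]⟩

theorem Fin.exists_perm_succAbove_comp_eq {n : ℕ} (σ : Equiv.Perm (Fin (n + 1))) (i : Fin (n + 1)) :
    ∃ τ : Equiv.Perm (Fin n), (σ i).succAbove ∘ τ = σ ∘ i.succAbove :=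
  (σ.injective.comp Fin.succAbove_right_injective).exists_perm_comp_eq Fin.succAbove_right_injective
    (by rw [Set.range_comp, Fin.range_succAbove, Fin.range_succAbove, Equiv.image_compl,
      Set.image_singleton])

open scoped Classical in
theorem sum_measure_le_mul_measure_univ_of_card_le {X ι : Type*} [MeasurableSpace X] [Fintype ι]
    (μ : Measure X) {A : ι → Set X} (hA : ∀ i, MeasurableSet (A i)) {k : ℕ}
    (hk : ∀ x, #{i | x ∈ A i} ≤ k) :
    ∑ i, μ (A i) ≤ k * μ Set.univ := by
  calc ∑ i, μ (A i) = ∫⁻ x, ∑ i, (A i).indicator 1 x ∂μ := by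
        rw [lintegral_finsetSum _ fun i _ => measurable_one.indicator (hA i)]
        simp only [lintegral_indicator_one (hA _)]
    _ = ∫⁻ x, (#{i | x ∈ A i} : ℝ≥0∞) ∂μ := by
        refine lintegral_congr fun x => ?_
        simp [Set.indicator_apply]
    _ ≤ ∫⁻ _, (k : ℝ≥0∞) ∂μ := lintegral_mono fun x => Nat.cast_le.mpr (hk x)
    _ = k * μ Set.univ := lintegral_const _

section Exchangeable

variable {ι 𝒴 α : Type*} [Fintype ι] [MeasurableSpace 𝒴] [LinearOrder α]
  {μ : Measure (ι → 𝒴)} {s : (ι → 𝒴) → ι → α}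

theorem measurable_conformalRank (hs : ∀ i j, MeasurableSet {y | s y i ≤ s y j}) (i : ι) :
    Measurable fun y => conformalRank (s y) i := by
  simp only [conformalRank, card_filter]
  exact Finset.measurable_sum _ fun j _ => Measurable.ite (hs i j) measurable_const measurable_const

theorem card_mul_measure_conformalRank_le
    (hμ : ∀ σ : Equiv.Perm ι, μ.map (fun y => y ∘ σ) = μ)
    (hs : ∀ i j, MeasurableSet {y | s y i ≤ s y j})
    (hequiv : ∀ (σ : Equiv.Perm ι) y, s (y ∘ σ) = s y ∘ σ) (k : ℕ) (i : ι) :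
    Fintype.card ι * μ {y | conformalRank (s y) i ≤ k} ≤ k * μ Set.univ := by
  classical
  set A : ι → Set (ι → 𝒴) := fun j => {y | conformalRank (s y) j ≤ k}
  have hA : ∀ j, MeasurableSet (A j) := fun j =>
    measurable_conformalRank hs j measurableSet_Iic
  have hA_eq : ∀ j, μ (A j) = μ (A i) := by
    intro j
    have hpre : (fun y => y ∘ Equiv.swap i j) ⁻¹' A i = A j := by
      ext y; simp [A, hequiv, conformalRank_comp_perm]
    rw [← hpre, ← Measure.map_apply (by fun_prop) (hA i), hμ]
  calc Fintype.card ι * μ (A i) = ∑ j, μ (A j) := by simp [hA_eq]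
    _ ≤ k * μ Set.univ := sum_measure_le_mul_measure_univ_of_card_le μ hA fun y =>
        by convert card_filter_conformalRank_le (s y) k; exact Iff.rfl

theorem measure_conformalPValue_le [IsProbabilityMeasure μ]
    (hμ : ∀ σ : Equiv.Perm ι, μ.map (fun y => y ∘ σ) = μ)
    (hs : ∀ i j, MeasurableSet {y | s y i ≤ s y j})
    (hequiv : ∀ (σ : Equiv.Perm ι) y, s (y ∘ σ) = s y ∘ σ) {a : ℝ} (ha : 0 ≤ a) (i : ι) :
    μ {y | conformalPValue (s y) i ≤ a} ≤ ENNReal.ofReal a := by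
  set c := Fintype.card ι
  have hc : (0 : ℝ) < c := Nat.cast_pos.mpr (Fintype.card_pos_iff.mpr ⟨i⟩)
  have hset : {y | conformalPValue (s y) i ≤ a} = {y | conformalRank (s y) i ≤ ⌊c * a⌋₊} := by
    ext y
    change _ / (c : ℝ) ≤ a ↔ _ ≤ ⌊(c : ℝ) * a⌋₊
    rw [div_le_iff₀ hc, mul_comm, Nat.le_floor_iff (by positivity)]
  have hbound := card_mul_measure_conformalRank_le hμ hs hequiv ⌊c * a⌋₊ i
  rw [measure_univ, mul_one, ← hset] at hbound
  refine (ENNReal.mul_le_mul_iff_right (a := c) (by simpa using hc.ne') (by simp)).mp ?_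
  calc (c : ℝ≥0∞) * μ {y | conformalPValue (s y) i ≤ a} ≤ ⌊c * a⌋₊ := hbound
    _ = ENNReal.ofReal ⌊c * a⌋₊ := (ENNReal.ofReal_natCast _).symm
    _ ≤ ENNReal.ofReal (c * a) := ENNReal.ofReal_le_ofReal (Nat.floor_le (by positivity))
    _ = c * ENNReal.ofReal a := by rw [ENNReal.ofReal_mul hc.le, ENNReal.ofReal_natCast]

end Exchangeable

section ConformityScore

variable {𝒴 β : Type*} {n : ℕ}

def conformityScore (Ψ : (Fin n → 𝒴) → 𝒴 → β) (y : Fin (n + 1) → 𝒴) (i : Fin (n + 1)) : β :=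
  Ψ (fun j => y (i.succAbove j)) (y i)

theorem conformityScore_comp_perm {Ψ : (Fin n → 𝒴) → 𝒴 → β}
    (hsym : ∀ τ : Equiv.Perm (Fin n), ∀ v y, Ψ (v ∘ τ) y = Ψ v y)
    (σ : Equiv.Perm (Fin (n + 1))) (y : Fin (n + 1) → 𝒴) :
    conformityScore Ψ (y ∘ σ) = conformityScore Ψ y ∘ σ := by
  funext i
  obtain ⟨τ, hτ⟩ := Fin.exists_perm_succAbove_comp_eq σ i
  show Ψ (y ∘ σ ∘ i.succAbove) (y (σ i)) = Ψ (y ∘ (σ i).succAbove) (y (σ i))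
  rw [← hτ, ← Function.comp_assoc, hsym]

theorem measurable_conformityScore [MeasurableSpace 𝒴] [MeasurableSpace β]
    {Ψ : (Fin n → 𝒴) → 𝒴 → β} (hΨ : Measurable fun p : (Fin n → 𝒴) × 𝒴 => Ψ p.1 p.2)
    (i : Fin (n + 1)) : Measurable fun y => conformityScore Ψ y i :=
  hΨ.comp (by fun_prop : Measurable fun y : Fin (n + 1) → 𝒴 => (y ∘ i.succAbove, y i))

end ConformityScore

/-- **Calibration property (pi.1) of the conformal transducer.** For an exchangeable
vector `(Y₁,…,Y_{n+1})` and a symmetric non-conformity measure `Ψ`, with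
`T_i = Ψ((Y_j)_{j≠i}, Y_i)` and conformal plausibility contour at the truth
`π(Y_{n+1}; Yⁿ) = (n+1)⁻¹ #{i : T_i ≥ T_{n+1}}`, one has
`P(π(Y_{n+1}; Yⁿ) ≤ k_n(α)) ≤ α` for all `α ∈ [0,1]`, with `k_n(α) = ⌊(n+1)α⌋/(n+1)`;
in particular `P(π(Y_{n+1}; Yⁿ) ≤ α) ≤ α`. -/
theorem stmt9
    {Ω 𝒴 : Type*} [MeasurableSpace Ω] [MeasurableSpace 𝒴]
    (Pr : Measure Ω) [IsProbabilityMeasure Pr] (n : ℕ)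
    (Y : Fin (n+1) → Ω → 𝒴) (hY : ∀ i, Measurable (Y i))
    (hexch : ∀ σ : Equiv.Perm (Fin (n+1)),
      Measure.map (fun ω => fun i => Y (σ i) ω) Pr
        = Measure.map (fun ω => fun i => Y i ω) Pr)
    (Ψ : (Fin n → 𝒴) → 𝒴 → ℝ)
    (hΨ : Measurable fun p : (Fin n → 𝒴) × 𝒴 => Ψ p.1 p.2)
    (hsym : ∀ σ : Equiv.Perm (Fin n), ∀ v y, Ψ (v ∘ σ) y = Ψ v y) :
    ∀ α ∈ Set.Icc (0:ℝ) 1,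
      Pr {ω | ((Finset.univ.filter fun i : Fin (n+1) =>
            Ψ (fun j => Y ((Fin.last n).succAbove j) ω) (Y (Fin.last n) ω)
              ≤ Ψ (fun j => Y (i.succAbove j) ω) (Y i ω)).card : ℝ) / ((n:ℝ)+1)
          ≤ (⌊((n:ℝ)+1)*α⌋ : ℝ)/((n:ℝ)+1)} ≤ ENNReal.ofReal α ∧
      Pr {ω | ((Finset.univ.filter fun i : Fin (n+1) =>
            Ψ (fun j => Y ((Fin.last n).succAbove j) ω) (Y (Fin.last n) ω)
              ≤ Ψ (fun j => Y (i.succAbove j) ω) (Y i ω)).card : ℝ) / ((n:ℝ)+1)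
          ≤ α} ≤ ENNReal.ofReal α := by
  rintro α ⟨hα, -⟩
  have hYv : Measurable fun ω i => Y i ω := measurable_pi_lambda _ hY
  set μ := Pr.map fun ω i => Y i ω
  have : IsProbabilityMeasure μ := Measure.isProbabilityMeasure_map hYv.aemeasurable
  have hμ : ∀ σ : Equiv.Perm (Fin (n + 1)), μ.map (fun y => y ∘ σ) = μ := fun σ => by
    rw [Measure.map_map (by fun_prop) hYv]; exact hexch σ
  have hscore : ∀ i j, MeasurableSet {y | conformityScore Ψ y i ≤ conformityScore Ψ y j} :=
    fun i j => measurableSet_le (measurable_conformityScore hΨ i) (measurable_conformityScore hΨ j)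
  have hcalib : Pr {ω | conformalPValue (conformityScore Ψ fun i => Y i ω) (Fin.last n) ≤ α}
      ≤ ENNReal.ofReal α :=
    (Measure.le_map_apply hYv.aemeasurable _).trans
      (measure_conformalPValue_le hμ hscore (conformityScore_comp_perm hsym) hα _)
  have hcard : (Fintype.card (Fin (n + 1)) : ℝ) = n + 1 := by simp
  simp only [conformalPValue, conformalRank, conformityScore, hcard] at hcalib
  have hfloor : (⌊((n : ℝ) + 1) * α⌋ : ℝ) / ((n : ℝ) + 1) ≤ α := by
    rw [div_le_iff₀ (by positivity), mul_comm]; exact Int.floor_le _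
  exact ⟨(measure_mono fun ω (hω : _ ≤ _) => hω.trans hfloor).trans hcalib, hcalib⟩
end

section
/- Let 𝒴 be a measurable space, n ∈ ℕ, (Y₁, …, Y_{n+1}) an exchangeable random vector in 𝒴^{n+1}, and Ψ : 𝒴ⁿ × 𝒴 → ℝ a measurable non-conformity measure invariant under permutations of its first argument, with T_i = Ψ((Y_j)_{j≠i}, Y_i). Assume the values T₁, …, T_{n+1} are almost surely pairwise distinct. Then the rank R = #{ i : T_i ≥ T_{n+1} } of T_{n+1} is uniformly distributed on {1, …, n+1}: ℙ(R = v) = 1/(n+1) for every v ∈ {1, …, n+1}. (Uniformity of the rank auxiliary variable in the A-step of the nonparametric IM construction.) -/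
/-!
Exchangeability together with the symmetry of `Ψ` says that permuting the sample permutes the
vector of scores, hence the ranks; so the events `{R_i = v}` all have the same probability.
When the scores are distinct the ranks are a bijection onto `{1, …, n+1}`, so almost surely
exactly one of these `n + 1` events occurs, and each has probability `1/(n+1)`.
-/

open MeasureTheory
open scoped ENNReal

theorem Function.Injective.exists_perm_eq_comp_of_range_eq {α β : Type*} {f g : α → β}
    (hf : f.Injective) (hg : g.Injective) (h : Set.range f = Set.range g) :
    ∃ τ : Equiv.Perm α, f = g ∘ τ :=
  ⟨(Equiv.ofInjective f hf).trans ((Equiv.setCongr h).trans (Equiv.ofInjective g hg).symm),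
    funext fun a => by simp [Equiv.apply_ofInjective_symm]⟩

theorem Fin.exists_perm_comp_succAbove {n : ℕ} (σ : Equiv.Perm (Fin (n + 1)))
    (i : Fin (n + 1)) : ∃ τ : Equiv.Perm (Fin n), σ ∘ i.succAbove = (σ i).succAbove ∘ τ := by
  refine (σ.injective.comp Fin.succAbove_right_injective).exists_perm_eq_comp_of_range_eq
    Fin.succAbove_right_injective ?_
  rw [Set.range_comp, Fin.range_succAbove, Fin.range_succAbove, Set.image_compl_eq σ.bijective,
    Set.image_singleton]

section descRank

variable {ι α : Type*} [Fintype ι] [LinearOrder α]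

def descRank (t : ι → α) (i : ι) : ℕ := (Finset.univ.filter fun k => t i ≤ t k).card

theorem descRank_comp_perm (t : ι → α) (σ : Equiv.Perm ι) (i : ι) :
    descRank (t ∘ σ) i = descRank t (σ i) :=
  Finset.card_equiv σ (by simp)

theorem descRank_pos (t : ι → α) (i : ι) : 0 < descRank t i :=
  Finset.card_pos.mpr ⟨i, by simp⟩

theorem descRank_le_card (t : ι → α) (i : ι) : descRank t i ≤ Fintype.card ι :=
  Finset.card_filter_le _ _

theorem descRank_lt_of_lt {t : ι → α} {a b : ι} (h : t a < t b) :
    descRank t b < descRank t a := by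
  refine Finset.card_lt_card ⟨fun k hk => ?_, fun hsub => ?_⟩
  · simp only [Finset.mem_filter, Finset.mem_univ, true_and] at hk ⊢
    exact h.le.trans hk
  · exact h.not_ge (by simpa using hsub (Finset.mem_filter.mpr ⟨Finset.mem_univ a, le_rfl⟩))

theorem descRank_injective {t : ι → α} (ht : t.Injective) : (descRank t).Injective := by
  intro a b hab
  by_contra hne
  rcases (ht.ne hne).lt_or_gt with h | h
  · exact (descRank_lt_of_lt h).ne' hab
  · exact (descRank_lt_of_lt h).ne hab

theorem existsUnique_descRank_eq {t : ι → α} (ht : t.Injective) {v : ℕ}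
    (hv : v ∈ Finset.Icc 1 (Fintype.card ι)) : ∃! i, descRank t i = v := by
  have himage : Finset.univ.image (descRank t) = Finset.Icc 1 (Fintype.card ι) := by
    refine Finset.eq_of_subset_of_card_le (fun w hw => ?_) ?_
    · obtain ⟨i, -, rfl⟩ := Finset.mem_image.mp hw
      exact Finset.mem_Icc.mpr ⟨descRank_pos t i, descRank_le_card t i⟩
    · simp [Finset.card_image_of_injective _ (descRank_injective ht)]
  obtain ⟨i, -, hi⟩ := Finset.mem_image.mp (himage ▸ hv)
  exact ⟨i, hi, fun j hj => descRank_injective ht (hj.trans hi.symm)⟩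

theorem measurable_descRank {X : Type*} [MeasurableSpace X] [TopologicalSpace α]
    [MeasurableSpace α] [OpensMeasurableSpace α] [OrderClosedTopology α]
    [SecondCountableTopology α] {t : X → ι → α} (ht : ∀ k, Measurable fun x => t x k) (i : ι) :
    Measurable fun x => descRank (t x) i := by
  simp only [descRank, Finset.card_filter]
  exact Finset.measurable_sum _ fun k _ =>
    Measurable.ite (measurableSet_le (ht i) (ht k)) measurable_const measurable_const

end descRank

section partition

variable {X ι : Type*} [MeasurableSpace X] [Fintype ι] {μ : Measure X} {A : ι → Set X}

theorem sum_measure_eq_measure_univ_of_ae_existsUnique (hA : ∀ i, MeasurableSet (A i))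
    (h : ∀ᵐ x ∂μ, ∃! i, x ∈ A i) : ∑ i, μ (A i) = μ Set.univ := by
  classical
  have hsum : ∀ᵐ x ∂μ, ∑ i, (A i).indicator 1 x = (1 : ℝ≥0∞) := by
    filter_upwards [h] with x ⟨i, hi, huniq⟩
    rw [Finset.sum_eq_single i
      (fun j _ hj => Set.indicator_of_notMem (fun hx => hj (huniq j hx)) _) (by simp)]
    simp [hi]
  calc ∑ i, μ (A i) = ∫⁻ x, ∑ i, (A i).indicator 1 x ∂μ := by
        rw [lintegral_finsetSum _ fun i _ => measurable_one.indicator (hA i)]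
        simp [lintegral_indicator_one (hA _)]
    _ = μ Set.univ := by simp [lintegral_congr_ae hsum]

theorem measure_eq_inv_card_of_ae_existsUnique [IsProbabilityMeasure μ]
    (hA : ∀ i, MeasurableSet (A i)) (h : ∀ᵐ x ∂μ, ∃! i, x ∈ A i)
    (heq : ∀ i j, μ (A i) = μ (A j)) (i : ι) : μ (A i) = (Fintype.card ι : ℝ≥0∞)⁻¹ := by
  refine ENNReal.eq_inv_of_mul_eq_one_left ?_
  rw [mul_comm, ← nsmul_eq_mul, ← Finset.card_univ, ← Finset.sum_const, ← measure_univ (μ := μ),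
    ← sum_measure_eq_measure_univ_of_ae_existsUnique hA h]
  exact Finset.sum_congr rfl fun j _ => heq i j

end partition

section nonconformityScore

variable {𝒴 : Type*} {n : ℕ}

def nonconformityScore (Ψ : (Fin n → 𝒴) → 𝒴 → ℝ) (y : Fin (n + 1) → 𝒴) (i : Fin (n + 1)) :
    ℝ :=
  Ψ (Fin.removeNth i y) (y i)

theorem nonconformityScore_comp_perm {Ψ : (Fin n → 𝒴) → 𝒴 → ℝ}
    (hsym : ∀ σ : Equiv.Perm (Fin n), ∀ v y, Ψ (v ∘ σ) y = Ψ v y)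
    (y : Fin (n + 1) → 𝒴) (σ : Equiv.Perm (Fin (n + 1))) :
    nonconformityScore Ψ (y ∘ σ) = nonconformityScore Ψ y ∘ σ := by
  funext i
  obtain ⟨τ, hτ⟩ := Fin.exists_perm_comp_succAbove σ i
  have hremove : Fin.removeNth i (y ∘ σ) = Fin.removeNth (σ i) y ∘ τ := by
    change y ∘ (σ ∘ i.succAbove) = y ∘ ((σ i).succAbove ∘ τ)
    rw [hτ]
  simp only [nonconformityScore, Function.comp_apply, hremove, hsym]

theorem measurable_nonconformityScore [MeasurableSpace 𝒴] {Ψ : (Fin n → 𝒴) → 𝒴 → ℝ}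
    (hΨ : Measurable fun p : (Fin n → 𝒴) × 𝒴 => Ψ p.1 p.2) (i : Fin (n + 1)) :
    Measurable fun y => nonconformityScore Ψ y i :=
  hΨ.comp (f := fun y : Fin (n + 1) → 𝒴 => (Fin.removeNth i y, y i))
    ((measurable_pi_lambda _ fun _ => measurable_pi_apply _).prodMk (measurable_pi_apply i))

end nonconformityScore

/-- **Uniformity of the rank auxiliary variable (A-step of the nonparametric IM).**
For an exchangeable vector `(Y₁,…,Y_{n+1})` and a symmetric non-conformity measure `Ψ`,
with `T_i = Ψ((Y_j)_{j≠i}, Y_i)` almost surely pairwise distinct, the (descending) rank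
`R = #{i : T_i ≥ T_{n+1}}` is uniform on `{1,…,n+1}`: `P(R = v) = 1/(n+1)`. -/
theorem stmt10
    {Ω 𝒴 : Type*} [MeasurableSpace Ω] [MeasurableSpace 𝒴]
    (Pr : Measure Ω) [IsProbabilityMeasure Pr] (n : ℕ)
    (Y : Fin (n+1) → Ω → 𝒴) (hY : ∀ i, Measurable (Y i))
    (hexch : ∀ σ : Equiv.Perm (Fin (n+1)),
      Measure.map (fun ω => fun i => Y (σ i) ω) Pr
        = Measure.map (fun ω => fun i => Y i ω) Pr)
    (Ψ : (Fin n → 𝒴) → 𝒴 → ℝ)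
    (hΨ : Measurable fun p : (Fin n → 𝒴) × 𝒴 => Ψ p.1 p.2)
    (hsym : ∀ σ : Equiv.Perm (Fin n), ∀ v y, Ψ (v ∘ σ) y = Ψ v y)
    (hdist : ∀ᵐ ω ∂Pr, ∀ i i' : Fin (n+1), i ≠ i' →
      Ψ (fun j => Y (i.succAbove j) ω) (Y i ω)
        ≠ Ψ (fun j => Y (i'.succAbove j) ω) (Y i' ω)) :
    ∀ v ∈ Finset.Icc 1 (n+1),
      Pr {ω | (Finset.univ.filter fun i : Fin (n+1) =>
            Ψ (fun j => Y ((Fin.last n).succAbove j) ω) (Y (Fin.last n) ω)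
              ≤ Ψ (fun j => Y (i.succAbove j) ω) (Y i ω)).card = v}
        = ((n : ℝ≥0∞) + 1)⁻¹ := by
  intro v hv
  let A : Fin (n + 1) → Set (Fin (n + 1) → 𝒴) :=
    fun i => {y | descRank (nonconformityScore Ψ y) i = v}
  have hA : ∀ i, MeasurableSet (A i) := fun i =>
    measurable_descRank (measurable_nonconformityScore hΨ) i (measurableSet_singleton v)
  have hYm : Measurable fun ω k => Y k ω := measurable_pi_lambda _ hY
  have hYσ : ∀ σ : Equiv.Perm (Fin (n + 1)), Measurable fun ω k => Y (σ k) ω := fun σ =>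
    measurable_pi_lambda _ fun k => hY (σ k)
  have hequal : ∀ i j, Pr ((fun ω k => Y k ω) ⁻¹' A i) = Pr ((fun ω k => Y k ω) ⁻¹' A j) := by
    intro i j
    have hpre : (fun ω k => Y (Equiv.swap i j k) ω) ⁻¹' A i = (fun ω k => Y k ω) ⁻¹' A j := by
      ext ω
      change descRank (nonconformityScore Ψ ((fun k => Y k ω) ∘ Equiv.swap i j)) i = v ↔ _
      rw [nonconformityScore_comp_perm hsym, descRank_comp_perm, Equiv.swap_apply_left]
      rfl
    rw [← hpre, ← Measure.map_apply (hYσ _) (hA i), hexch, Measure.map_apply hYm (hA i)]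
  have hunique : ∀ᵐ ω ∂Pr, ∃! i, ω ∈ (fun ω k => Y k ω) ⁻¹' A i := by
    filter_upwards [hdist] with ω hω
    refine existsUnique_descRank_eq (fun i i' h => ?_) (by simpa using hv)
    by_contra hne
    exact hω i i' hne h
  have := measure_eq_inv_card_of_ae_existsUnique (fun i => hYm (hA i)) hunique hequal (Fin.last n)
  rwa [Fintype.card_fin, Nat.cast_add_one] at this
end

section
/- Under the setting of conformal prediction—(Y₁, …, Y_{n+1}) exchangeable in 𝒴^{n+1}, Ψ a measurable symmetric non-conformity measure, and π(ỹ; yⁿ) the conformal plausibility contour—the conformal prediction region 𝒫_α(yⁿ) = { ỹ ∈ 𝒴 : π(ỹ; yⁿ) > k_n(α) } has guaranteed coverage: ℙ( Y_{n+1} ∈ 𝒫_α(Yⁿ) ) ≥ 1 − α for every α ∈ [0,1] and every exchangeable law. (Weak prediction validity of conformal prediction regions.) -/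
/-!
Score every coordinate of the completed vector `(Y₁, …, Y_{n+1})` against the other `n`
coordinates. Since `Ψ` is symmetric, permuting the data permutes the scores, so by
exchangeability the rank of the score of `Y_{n+1}` has the same law as the rank of any other
score. At most `t` scores can have upper rank `≤ t` (the smallest of them already has that many
scores above it), so averaging over the `n + 1` coordinates gives
`ℙ(rank of Y_{n+1} ≤ (n+1)α) ≤ α`. Since the rank is an integer, this event is exactly the
miscoverage event `π(Y_{n+1}; Yⁿ) ≤ k_n(α)`.
-/

open MeasureTheory

/-- The conformal plausibility contour: for observed data `yn ∈ 𝒴ⁿ` and candidate value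
`yt ∈ 𝒴`, writing `y^{n+1} = (yn, yt)` (via `Fin.snoc`) and
`T_i = Ψ(y^{n+1}_{-i}, y^{n+1}_i)`, it equals `(n+1)⁻¹ #{i : T_i ≥ T_{n+1}}`. -/
noncomputable def conformalContour {𝒴 : Type*} (n : ℕ)
    (Ψ : (Fin n → 𝒴) → 𝒴 → ℝ) (yn : Fin n → 𝒴) (yt : 𝒴) : ℝ :=
  let y' : Fin (n+1) → 𝒴 := Fin.snoc yn yt
  ((Finset.univ.filter fun i : Fin (n+1) =>
      Ψ (fun j => y' ((Fin.last n).succAbove j)) (y' (Fin.last n))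
        ≤ Ψ (fun j => y' (i.succAbove j)) (y' i)).card : ℝ)
    / ((n:ℝ)+1)

open Finset ENNReal

def IsExchangeable {ι X : Type*} [MeasurableSpace X] (μ : Measure (ι → X)) : Prop :=
  ∀ σ : Equiv.Perm ι, μ.map (fun y => y ∘ σ) = μ

section UpperRank

variable {ι α : Type*} [Fintype ι] [LinearOrder α]

def upperRank (T : ι → α) (k : ι) : ℕ :=
  #{i | T k ≤ T i}

theorem upperRank_comp_perm (T : ι → α) (σ : Equiv.Perm ι) (k : ι) :
    upperRank (T ∘ σ) k = upperRank T (σ k) :=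
  card_bij' (fun i _ => σ i) (fun i _ => σ.symm i) (by simp) (by simp) (by simp) (by simp)

theorem card_upperRank_le_le (T : ι → α) {t : ℝ} (ht : 0 ≤ t) :
    (#{k | (upperRank T k : ℝ) ≤ t} : ℝ) ≤ t := by
  set S : Finset ι := {k | (upperRank T k : ℝ) ≤ t}
  rcases S.eq_empty_or_nonempty with hS | hS
  · simpa [hS] using ht
  obtain ⟨k₀, hk₀, hmin⟩ := S.exists_min_image T hS
  have hsub : S ⊆ univ.filter (T k₀ ≤ T ·) := fun k hk => mem_filter.mpr ⟨mem_univ k, hmin k hk⟩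
  calc (#S : ℝ) ≤ upperRank T k₀ := by exact_mod_cast card_le_card hsub
    _ ≤ t := (mem_filter.mp hk₀).2

end UpperRank

theorem sum_measure_le_of_forall_sum_indicator_le {ι X : Type*} [MeasurableSpace X]
    (μ : Measure X) (s : Finset ι) {A : ι → Set X} (hA : ∀ i ∈ s, MeasurableSet (A i)) {c : ℝ≥0∞}
    (hc : ∀ x, ∑ i ∈ s, (A i).indicator 1 x ≤ c) :
    ∑ i ∈ s, μ (A i) ≤ c * μ Set.univ :=
  calc ∑ i ∈ s, μ (A i) = ∑ i ∈ s, ∫⁻ x, (A i).indicator 1 x ∂μ :=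
        sum_congr rfl fun i hi => (lintegral_indicator_one (hA i hi)).symm
    _ = ∫⁻ x, ∑ i ∈ s, (A i).indicator 1 x ∂μ :=
        (lintegral_finsetSum _ fun i hi => measurable_one.indicator (hA i hi)).symm
    _ ≤ ∫⁻ _, c ∂μ := lintegral_mono hc
    _ = c * μ Set.univ := lintegral_const c

theorem measurable_comp_right {ι κ X : Type*} [MeasurableSpace X] (g : ι → κ) :
    Measurable fun y : κ → X => y ∘ g :=
  measurable_pi_lambda _ fun _ => measurable_pi_apply _

theorem floor_div_lt_natCast_div_iff {N : ℝ} (hN : 0 < N) (x : ℝ) (r : ℕ) :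
    (⌊x⌋ : ℝ) / N < r / N ↔ x < r := by
  rw [div_lt_div_iff_of_pos_right hN, ← Int.cast_natCast, Int.cast_lt, Int.floor_lt,
    Int.cast_natCast]

section ConformalScore

variable {𝒴 : Type*} {n : ℕ}

/-- `T_i = Ψ(y_{-i}, y_i)`. -/
def conformalScore (Ψ : (Fin n → 𝒴) → 𝒴 → ℝ) (y : Fin (n+1) → 𝒴) (i : Fin (n+1)) : ℝ :=
  Ψ (fun j => y (i.succAbove j)) (y i)

theorem conformalContour_init_last (Ψ : (Fin n → 𝒴) → 𝒴 → ℝ) (y : Fin (n+1) → 𝒴) :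
    conformalContour n Ψ (Fin.init y) (y (Fin.last n))
      = upperRank (conformalScore Ψ y) (Fin.last n) / ((n:ℝ) + 1) := by
  simp only [conformalContour, Fin.snoc_init_self]
  rfl

theorem exists_perm_succAbove_apply (σ : Equiv.Perm (Fin (n+1))) (k : Fin (n+1)) :
    ∃ τ : Equiv.Perm (Fin n), ∀ j, (σ k).succAbove (τ j) = σ (k.succAbove j) := by
  let τ : Equiv.Perm (Fin n) := ((finSuccAboveEquiv k).trans
    (σ.subtypeEquiv fun _ => σ.injective.ne_iff.symm)).trans (finSuccAboveEquiv (σ k)).symm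
  exact ⟨τ, fun j => congrArg Subtype.val ((finSuccAboveEquiv (σ k)).apply_symm_apply _)⟩

theorem conformalScore_comp_perm {Ψ : (Fin n → 𝒴) → 𝒴 → ℝ}
    (hsym : ∀ σ : Equiv.Perm (Fin n), ∀ v y, Ψ (v ∘ σ) y = Ψ v y)
    (σ : Equiv.Perm (Fin (n+1))) (y : Fin (n+1) → 𝒴) :
    conformalScore Ψ (y ∘ σ) = conformalScore Ψ y ∘ σ := by
  funext i
  obtain ⟨τ, hτ⟩ := exists_perm_succAbove_apply σ i
  have hdata : (fun j => (y ∘ σ) (i.succAbove j)) = (fun j => y ((σ i).succAbove j)) ∘ τ := by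
    funext j; simp [hτ j]
  change Ψ (fun j => (y ∘ σ) (i.succAbove j)) (y (σ i)) = conformalScore Ψ y (σ i)
  rw [hdata, hsym]
  rfl

variable [MeasurableSpace 𝒴] {Ψ : (Fin n → 𝒴) → 𝒴 → ℝ}

theorem measurable_conformalScore (hΨ : Measurable fun p : (Fin n → 𝒴) × 𝒴 => Ψ p.1 p.2)
    (i : Fin (n+1)) : Measurable fun y : Fin (n+1) → 𝒴 => conformalScore Ψ y i :=
  hΨ.comp (f := fun y : Fin (n+1) → 𝒴 => (y ∘ i.succAbove, y i))
    ((measurable_comp_right _).prodMk (measurable_pi_apply i))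

theorem measurable_upperRank_conformalScore
    (hΨ : Measurable fun p : (Fin n → 𝒴) × 𝒴 => Ψ p.1 p.2) (k : Fin (n+1)) :
    Measurable fun y : Fin (n+1) → 𝒴 => upperRank (conformalScore Ψ y) k := by
  simp only [upperRank, card_filter]
  exact Finset.measurable_sum _ fun i _ => Measurable.ite
    (measurableSet_le (measurable_conformalScore hΨ k) (measurable_conformalScore hΨ i))
    measurable_const measurable_const

theorem measurableSet_upperRank_conformalScore_le
    (hΨ : Measurable fun p : (Fin n → 𝒴) × 𝒴 => Ψ p.1 p.2) (k : Fin (n+1)) (t : ℝ) :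
    MeasurableSet {y : Fin (n+1) → 𝒴 | (upperRank (conformalScore Ψ y) k : ℝ) ≤ t} :=
  measurableSet_le (measurable_from_nat.comp (measurable_upperRank_conformalScore hΨ k))
    measurable_const

theorem IsExchangeable.measure_upperRank_conformalScore_le_eq {μ : Measure (Fin (n+1) → 𝒴)}
    (hμ : IsExchangeable μ) (hΨ : Measurable fun p : (Fin n → 𝒴) × 𝒴 => Ψ p.1 p.2)
    (hsym : ∀ σ : Equiv.Perm (Fin n), ∀ v y, Ψ (v ∘ σ) y = Ψ v y) (t : ℝ) (k k' : Fin (n+1)) :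
    μ {y | (upperRank (conformalScore Ψ y) k : ℝ) ≤ t}
      = μ {y | (upperRank (conformalScore Ψ y) k' : ℝ) ≤ t} := by
  let σ := Equiv.swap k' k
  have hpre : (fun y => y ∘ σ) ⁻¹' {y | (upperRank (conformalScore Ψ y) k' : ℝ) ≤ t}
      = {y | (upperRank (conformalScore Ψ y) k : ℝ) ≤ t} := by
    ext y
    simp [conformalScore_comp_perm hsym, upperRank_comp_perm, σ]
  rw [← hpre, ← Measure.map_apply (measurable_comp_right σ) (measurableSet_upperRank_conformalScore_le hΨ k' t), hμ σ]

theorem IsExchangeable.measure_upperRank_conformalScore_last_le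
    {μ : Measure (Fin (n+1) → 𝒴)} [IsProbabilityMeasure μ]
    (hμ : IsExchangeable μ) (hΨ : Measurable fun p : (Fin n → 𝒴) × 𝒴 => Ψ p.1 p.2)
    (hsym : ∀ σ : Equiv.Perm (Fin n), ∀ v y, Ψ (v ∘ σ) y = Ψ v y) {α : ℝ} (hα : 0 ≤ α) :
    μ {y | (upperRank (conformalScore Ψ y) (Fin.last n) : ℝ) ≤ (n + 1) * α}
      ≤ ENNReal.ofReal α := by
  set A : Fin (n+1) → Set (Fin (n+1) → 𝒴) :=
    fun k => {y | (upperRank (conformalScore Ψ y) k : ℝ) ≤ (n + 1) * α}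
  have ht : 0 ≤ ((n:ℝ) + 1) * α := by positivity
  have hcount : ∀ y, ∑ k, (A k).indicator 1 y ≤ ENNReal.ofReal ((n + 1) * α) := fun y => by
    have h := card_upperRank_le_le (conformalScore Ψ y) ht
    rw [← ENNReal.ofReal_le_ofReal_iff ht, ofReal_natCast] at h
    simpa [Set.indicator_apply, sum_boole, A] using h
  have hequal : ∀ k, μ (A k) = μ (A (Fin.last n)) :=
    fun k => hμ.measure_upperRank_conformalScore_le_eq hΨ hsym _ k (Fin.last n)
  have hsum : ((n : ℝ≥0∞) + 1) * μ (A (Fin.last n)) ≤ ((n : ℝ≥0∞) + 1) * ENNReal.ofReal α :=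
    calc ((n : ℝ≥0∞) + 1) * μ (A (Fin.last n)) = ∑ k, μ (A k) := by simp [hequal]
      _ ≤ ENNReal.ofReal ((n + 1) * α) * μ Set.univ := sum_measure_le_of_forall_sum_indicator_le μ
          univ (fun k _ => measurableSet_upperRank_conformalScore_le hΨ k _) hcount
      _ = ((n : ℝ≥0∞) + 1) * ENNReal.ofReal α := by
          rw [measure_univ, mul_one, ENNReal.ofReal_mul (by positivity),
            ENNReal.ofReal_add (by positivity) zero_le_one, ofReal_natCast, ENNReal.ofReal_one]
  exact (ENNReal.mul_le_mul_iff_right (by positivity) (by simp)).mp hsum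

end ConformalScore

/-- **Weak prediction validity of conformal prediction regions.** For an exchangeable
vector `(Y₁,…,Y_{n+1})` and a symmetric non-conformity measure `Ψ`, the conformal
prediction region `𝒫_α(yⁿ) = {yt : π(yt; yⁿ) > k_n(α)}`, with
`k_n(α) = ⌊(n+1)α⌋/(n+1)`, has coverage `P(Y_{n+1} ∈ 𝒫_α(Yⁿ)) ≥ 1 - α` for every
`α ∈ [0,1]`. -/
theorem stmt12
    {Ω 𝒴 : Type*} [MeasurableSpace Ω] [MeasurableSpace 𝒴]
    (Pr : Measure Ω) [IsProbabilityMeasure Pr] (n : ℕ)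
    (Y : Fin (n+1) → Ω → 𝒴) (hY : ∀ i, Measurable (Y i))
    (hexch : ∀ σ : Equiv.Perm (Fin (n+1)),
      Measure.map (fun ω => fun i => Y (σ i) ω) Pr
        = Measure.map (fun ω => fun i => Y i ω) Pr)
    (Ψ : (Fin n → 𝒴) → 𝒴 → ℝ)
    (hΨ : Measurable fun p : (Fin n → 𝒴) × 𝒴 => Ψ p.1 p.2)
    (hsym : ∀ σ : Equiv.Perm (Fin n), ∀ v y, Ψ (v ∘ σ) y = Ψ v y) :
    ∀ α ∈ Set.Icc (0:ℝ) 1,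
      1 - ENNReal.ofReal α ≤
        Pr {ω | Y (Fin.last n) ω ∈
          {yt : 𝒴 | conformalContour n Ψ (fun j => Y j.castSucc ω) yt
            > (⌊((n:ℝ)+1)*α⌋ : ℝ)/((n:ℝ)+1)}} := by
  rintro α ⟨hα, -⟩
  let f : Ω → Fin (n+1) → 𝒴 := fun ω i => Y i ω
  have hf : Measurable f := measurable_pi_lambda _ hY
  have hμ : IsExchangeable (Pr.map f) := fun σ => by
    rw [Measure.map_map (measurable_comp_right σ) hf]
    exact hexch σ
  have hcover : {ω | Y (Fin.last n) ω ∈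
        {yt : 𝒴 | conformalContour n Ψ (fun j => Y j.castSucc ω) yt
          > (⌊((n:ℝ)+1)*α⌋ : ℝ)/((n:ℝ)+1)}}
      = (f ⁻¹' {y | (upperRank (conformalScore Ψ y) (Fin.last n) : ℝ) ≤ (n + 1) * α})ᶜ := by
    ext ω
    have hcontour := conformalContour_init_last Ψ (f ω)
    simp only [Set.mem_ofPred_eq, Set.mem_compl_iff, Set.mem_preimage, not_le, gt_iff_lt]
    exact hcontour ▸ floor_div_lt_natCast_div_iff (by positivity) _ _
  have hmeas := measurableSet_upperRank_conformalScore_le hΨ (Fin.last n) ((n + 1) * α)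
  rw [hcover, prob_compl_eq_one_sub (hf hmeas), ← Measure.map_apply hf hmeas]
  have := Measure.isProbabilityMeasure_map (μ := Pr) hf.aemeasurable
  exact tsub_le_tsub_left (hμ.measure_upperRank_conformalScore_last_le hΨ hsym hα) 1
end
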